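/- arXiv:2605.21656 — 2 statements merged into one kernel-verified Lean document; each statement's English description precedes it below -/
import Mathlib

section
/- If β·(α+γ) < 4, then the logit map L_t is a contraction on [0,1] with Lipschitz constant β·(α+γ)/4 < 1; that is, |L_t(p) − L_t(q)| ≤ (β·(α+γ)/4)·|p − q| for all p, q ∈ [0,1]. Consequently L_t has a unique fixed point in [0,1]. -/
/-- The logit map with status-quo bias: `L_t(p) = 1/(1 + exp(β(α − κ − p(α+γ) + t)))`. -/
noncomputable def logitMap (α γ κ β t p : ℝ) : ℝ :=
  1 / (1 + Real.exp (β * (α - κ - p * (α + γ) + t)))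

/-!
`L_t` is the logistic sigmoid `σ(x) = 1/(1 + e^{-x})` composed with the affine map
`p ↦ β(α+γ)p − β(α − κ + t)`. Since `σ' = σ(1 − σ) ≤ 1/4`, the mean value theorem makes `σ`
`1/4`-Lipschitz, so `L_t` is `β(α+γ)/4`-Lipschitz. As `L_t` maps `[0,1]` into itself, the
intermediate value theorem gives a fixed point, and a contraction has at most one.
-/

open Set Real Function

theorem eq_of_isFixedPt_of_dist_le_mul {X : Type*} [MetricSpace X] {f : X → X} {K : ℝ}
    (hK : K < 1) {x y : X} (hxy : dist (f x) (f y) ≤ K * dist x y)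
    (hx : IsFixedPt f x) (hy : IsFixedPt f y) : x = y := by
  rw [hx.eq, hy.eq] at hxy
  exact dist_le_zero.mp (by nlinarith [dist_nonneg (x := x) (y := y)])

namespace Real

theorem sigmoid_mul_one_sub_sigmoid_le (x : ℝ) : sigmoid x * (1 - sigmoid x) ≤ 4⁻¹ := by
  nlinarith [sq_nonneg (2 * sigmoid x - 1)]

theorem lipschitzWith_sigmoid : LipschitzWith 4⁻¹ sigmoid := by
  refine lipschitzWith_of_nnnorm_deriv_le differentiable_sigmoid fun x => ?_
  rw [← NNReal.coe_le_coe, coe_nnnorm, deriv_sigmoid, norm_eq_abs,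
    abs_of_nonneg (mul_nonneg (sigmoid_nonneg x) (sub_nonneg.mpr (sigmoid_le_one x)))]
  simpa using sigmoid_mul_one_sub_sigmoid_le x

theorem abs_sigmoid_sub_sigmoid_le (x y : ℝ) : |sigmoid x - sigmoid y| ≤ |x - y| / 4 := by
  have := lipschitzWith_sigmoid.dist_le_mul x y
  simp only [dist_eq, NNReal.coe_inv, NNReal.coe_ofNat] at this
  linarith

end Real

section logitMap

variable (α γ κ β t : ℝ)

theorem logitMap_eq_sigmoid (p : ℝ) :
    logitMap α γ κ β t p = sigmoid (β * (α + γ) * p - β * (α - κ + t)) := by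
  rw [logitMap, sigmoid_def, one_div]
  ring_nf

theorem logitMap_mem_Icc (p : ℝ) : logitMap α γ κ β t p ∈ Icc 0 1 := by
  rw [logitMap_eq_sigmoid]
  exact ⟨sigmoid_nonneg _, sigmoid_le_one _⟩

theorem continuous_logitMap : Continuous (logitMap α γ κ β t) := by
  simp only [funext (logitMap_eq_sigmoid α γ κ β t)]
  exact continuous_sigmoid.comp (by fun_prop)

theorem abs_logitMap_sub_logitMap_le (hk : 0 ≤ β * (α + γ)) (p q : ℝ) :
    |logitMap α γ κ β t p - logitMap α γ κ β t q| ≤ β * (α + γ) / 4 * |p - q| := by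
  calc |logitMap α γ κ β t p - logitMap α γ κ β t q|
      ≤ |β * (α + γ) * p - β * (α - κ + t) - (β * (α + γ) * q - β * (α - κ + t))| / 4 := by
        simp only [logitMap_eq_sigmoid]
        exact abs_sigmoid_sub_sigmoid_le _ _
    _ = β * (α + γ) / 4 * |p - q| := by
        rw [sub_sub_sub_cancel_right, ← mul_sub, abs_mul, abs_of_nonneg hk]
        ring

end logitMap

theorem stmt_1_general (α γ κ β t : ℝ) (hα : 0 < α) (hγ : 0 < γ) (hβ : 0 < β)
    (hcontr : β * (α + γ) < 4) :
    β * (α + γ) / 4 < 1 ∧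
    (∀ p ∈ Set.Icc (0 : ℝ) 1, ∀ q ∈ Set.Icc (0 : ℝ) 1,
      |logitMap α γ κ β t p - logitMap α γ κ β t q| ≤ β * (α + γ) / 4 * |p - q|) ∧
    (∃! p, p ∈ Set.Icc (0 : ℝ) 1 ∧ logitMap α γ κ β t p = p) := by
  have hlip := abs_logitMap_sub_logitMap_le α γ κ β t (by positivity)
  have hK : β * (α + γ) / 4 < 1 := by linarith
  obtain ⟨p, hp, hfix⟩ := exists_mem_Icc_isFixedPt_of_mapsTo
    (continuous_logitMap α γ κ β t).continuousOn zero_le_one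
    (fun p _ => logitMap_mem_Icc α γ κ β t p)
  refine ⟨hK, fun p _ q _ => hlip p q, p, ⟨hp, hfix⟩, fun q ⟨_, hq⟩ => ?_⟩
  exact eq_of_isFixedPt_of_dist_le_mul hK (by simpa only [dist_eq] using hlip q p) hq hfix

/-- If `β(α+γ) < 4`, then `L_t` is a contraction on `[0,1]` with Lipschitz constant
`β(α+γ)/4 < 1`, and consequently has a unique fixed point in `[0,1]`. -/
theorem stmt_1 (α γ κ β t : ℝ) (hα : 0 < α) (hγ : 0 < γ) (hκ : 0 ≤ κ) (hβ : 0 < β)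
    (hcontr : β * (α + γ) < 4) :
    β * (α + γ) / 4 < 1 ∧
    (∀ p ∈ Set.Icc (0 : ℝ) 1, ∀ q ∈ Set.Icc (0 : ℝ) 1,
      |logitMap α γ κ β t p - logitMap α γ κ β t q| ≤ β * (α + γ) / 4 * |p - q|) ∧
    (∃! p, p ∈ Set.Icc (0 : ℝ) 1 ∧ logitMap α γ κ β t p = p) :=
  stmt_1_general α γ κ β t hα hγ hβ hcontr
end

section
/- Assume β·(α+γ) < 4 and let p_t denote the unique fixed point in [0,1] of the logit map L_t. Then p_t → 1 as t → −∞. Combined with p_t → 0 as t → +∞ and strict monotonicity of t ↦ p_t, the map t ↦ p_t is a strictly decreasing bijection from ℝ onto an open subinterval of (0,1); in particular, for every target probability q strictly between these limits there is exactly one tax t with p_t = q. -/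
/-!
Solving `L_t(q) = q` for `t` shows that the equilibrium curve is the graph of an explicit
function `t = T(q) = log((1-q)/q)/β - α + κ + q(α+γ)` on `(0,1)`. Its derivative
`-1/(β q(1-q)) + (α+γ)` is negative because `q(1-q) ≤ 1/4` and `β(α+γ) < 4`, so `T` is a
strictly decreasing bijection `(0,1) → ℝ` and `t ↦ p_t` is its inverse. Monotonicity and the
range `(0,1)` then give the limits at `±∞`.
-/

open Filter

open Set Real

lemma logitMap_mem_Ioo (α γ κ β t p : ℝ) : logitMap α γ κ β t p ∈ Ioo 0 1 := by
  have he := exp_pos (β * (α - κ - p * (α + γ) + t))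
  refine ⟨by unfold logitMap; positivity, ?_⟩
  rw [logitMap, div_lt_one (by positivity)]
  linarith

noncomputable def equilibriumTax (α γ κ β q : ℝ) : ℝ :=
  log ((1 - q) / q) / β - α + κ + q * (α + γ)

lemma logitMap_eq_self_iff {α γ κ β t q : ℝ} (hβ : β ≠ 0) (hq : q ∈ Ioo 0 1) :
    logitMap α γ κ β t q = q ↔ equilibriumTax α γ κ β q = t := by
  obtain ⟨hq0, hq1⟩ := hq
  have hodds : 0 < (1 - q) / q := div_pos (by linarith) hq0
  calc logitMap α γ κ β t q = q
      ↔ exp (β * (α - κ - q * (α + γ) + t)) = (1 - q) / q := by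
        rw [logitMap, div_eq_iff (by positivity), eq_div_iff hq0.ne']
        constructor <;> intro h <;> linarith
    _ ↔ β * (α - κ - q * (α + γ) + t) = log ((1 - q) / q) := by
        constructor
        · intro h; rw [← h, log_exp]
        · intro h; rw [h, exp_log hodds]
    _ ↔ equilibriumTax α γ κ β q = t := by
        constructor
        · intro h; rw [equilibriumTax, ← h]; field_simp; ring
        · intro h; rw [← h, equilibriumTax]; field_simp; ring

lemma hasDerivAt_equilibriumTax (α γ κ β : ℝ) {q : ℝ} (hq : q ∈ Ioo 0 1) :
    HasDerivAt (equilibriumTax α γ κ β) (-1 / (q * (1 - q)) / β + (α + γ)) q := by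
  obtain ⟨hq0, hq1⟩ := hq
  have hodds : HasDerivAt (fun x => (1 - x) / x) (-1 / q ^ 2) q :=
    (((hasDerivAt_id' q).const_sub 1).div (hasDerivAt_id' q) hq0.ne').congr_deriv (by ring)
  have hlog := hodds.log (div_pos (by linarith) hq0).ne'
  refine ((((hlog.div_const β).sub_const α).add_const κ).add
    ((hasDerivAt_id' q).mul_const (α + γ))).congr_deriv ?_
  field_simp

lemma strictAntiOn_equilibriumTax {α γ κ β : ℝ} (hβ : 0 < β) (hcontr : β * (α + γ) < 4) :
    StrictAntiOn (equilibriumTax α γ κ β) (Ioo 0 1) := by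
  refine strictAntiOn_of_deriv_neg (convex_Ioo 0 1) (fun q hq => ?_) fun q hq => ?_
  · exact (hasDerivAt_equilibriumTax α γ κ β hq).continuousAt.continuousWithinAt
  rw [interior_Ioo] at hq
  rw [(hasDerivAt_equilibriumTax α γ κ β hq).deriv]
  obtain ⟨hq0, hq1⟩ := hq
  have hvar : 0 < q * (1 - q) := mul_pos hq0 (by linarith)
  have : β * (α + γ) * (q * (1 - q)) < 1 := by nlinarith [sq_nonneg (2 * q - 1)]
  rw [div_div, div_add' _ _ _ (by positivity)]
  exact div_neg_of_neg_of_pos (by nlinarith) (by positivity)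

lemma Antitone.tendsto_of_range_eq_Ioo {ι α : Type*} [Preorder ι]
    [ConditionallyCompleteLinearOrder α] [TopologicalSpace α] [OrderTopology α]
    [DenselyOrdered α] {f : ι → α} {a b : α} (hf : Antitone f)
    (hab : a < b) (hrange : range f = Ioo a b) :
    Tendsto f atBot (nhds b) ∧ Tendsto f atTop (nhds a) := by
  have hsup : ⨆ t, f t = b := by rw [iSup, hrange, csSup_Ioo hab]
  have hinf : ⨅ t, f t = a := by rw [iInf, hrange, csInf_Ioo hab]
  refine ⟨hsup ▸ tendsto_atBot_ciSup hf ?_, hinf ▸ tendsto_atTop_ciInf hf ?_⟩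
  · exact hrange ▸ bddAbove_Ioo
  · exact hrange ▸ bddBelow_Ioo

theorem stmt_15_general (α γ κ β : ℝ) (hβ : 0 < β)
    (hcontr : β * (α + γ) < 4)
    (p : ℝ → ℝ)
    (hfix : ∀ t, logitMap α γ κ β t (p t) = p t) :
    Tendsto p atBot (nhds 1) ∧ Tendsto p atTop (nhds 0) ∧ StrictAnti p ∧
    Set.range p = Set.Ioo (0 : ℝ) 1 ∧
    ∀ q ∈ Set.Ioo (0 : ℝ) 1, ∃! t : ℝ, p t = q := by
  have hmem (t : ℝ) : p t ∈ Ioo 0 1 := hfix t ▸ logitMap_mem_Ioo α γ κ β t (p t)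
  have htax (t : ℝ) : equilibriumTax α γ κ β (p t) = t :=
    (logitMap_eq_self_iff hβ.ne' (hmem t)).1 (hfix t)
  have hanti : StrictAntiOn (equilibriumTax α γ κ β) (Ioo 0 1) :=
    strictAntiOn_equilibriumTax hβ hcontr
  have hp : StrictAnti p := fun s t hst =>
    (hanti.lt_iff_gt (hmem s) (hmem t)).1 (by rwa [htax, htax])
  have hrange : range p = Ioo 0 1 := by
    refine (range_subset_iff.2 hmem).antisymm fun q hq => ⟨equilibriumTax α γ κ β q, ?_⟩
    exact hanti.injOn (hmem _) hq (htax _)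
  obtain ⟨hbot, htop⟩ := hp.antitone.tendsto_of_range_eq_Ioo zero_lt_one hrange
  refine ⟨hbot, htop, hp, hrange, fun q hq => ?_⟩
  obtain ⟨t, rfl⟩ := hrange ▸ hq
  exact ⟨t, rfl, fun s hs => hp.injective hs⟩

/-- Under the contraction condition, the unique QRE-SB equilibrium probability `p_t`
tends to `1` as `t → −∞` and to `0` as `t → +∞`, and `t ↦ p_t` is strictly decreasing;
hence it is a strictly decreasing bijection from `ℝ` onto an open subinterval of `(0,1)`:
for every target probability `q` strictly between the limits `0` and `1` there is exactly
one tax `t` with `p_t = q`. -/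
theorem stmt_15 (α γ κ β : ℝ) (hα : 0 < α) (hγ : 0 < γ) (hκ : 0 ≤ κ) (hβ : 0 < β)
    (hcontr : β * (α + γ) < 4)
    (p : ℝ → ℝ) (hmem : ∀ t, p t ∈ Set.Icc (0 : ℝ) 1)
    (hfix : ∀ t, logitMap α γ κ β t (p t) = p t) :
    Tendsto p atBot (nhds 1) ∧ Tendsto p atTop (nhds 0) ∧ StrictAnti p ∧
    Set.range p = Set.Ioo (0 : ℝ) 1 ∧
    ∀ q ∈ Set.Ioo (0 : ℝ) 1, ∃! t : ℝ, p t = q :=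
  stmt_15_general α γ κ β hβ hcontr p hfix
end
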